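/- Fix e₁ ∈ ℂ and define, on the quadratic grid, the operators U = M₁ + e₁L, V = M₂ + e₁M₁ + ½e₁²L, Y = L, and R = R₂ + (2e₁−3)R₁ + ½(3e₁²−10e₁+4)M₂ + ½(e₁+1)(e₁²−4e₁+2)M₁ + ⅛(e₁⁴−4e₁³−8e₁²+24e₁−8)L. Then these operators satisfy, pointwise at every x ∈ ℂ with all arising denominators nonzero, the relations [V,Y] = −{U,Y}, [U,Y] = −{Y,Y}, [U,V] = {V,Y} − 2{Y,Y}, [R,Y] = {U,U} − {U,V} + {V,Y}, [R,V] = 2{V,Y} − {Y,Y} − {V,V} − {U,R}, [R,U] = {U,V} + 2{V,Y} − 2{U,Y} − {V,V} − {Y,Y} − {R,Y}; moreover in this realization the central elements take the values Q₁ = U² − {V,Y} + 3Y² = Id and Q₂ = U² + V² − {U,V} − {U,Y} − {R,Y} = (e₁−2)(e₁−4)·Id. -/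

import Mathlib

/-! Every operator involved is a two-term shift operator
`f ↦ (a(x) f(x+1) + b(x) f(x-1)) / 4x` with coefficients polynomial in `x` and `e₁`, so every
product of two of them is a three-term operator in `f(x+2), f(x), f(x-2)` over the common
denominator `16 x (x+1) (x-1)`. Each relation is then an identity between the polynomial
coefficients of `f(x+2)`, `f(x)` and `f(x-2)`. -/

noncomputable section

/-- The S–Heun lowering operator L on the quadratic grid λ_x = x². -/
def opL (f : ℂ → ℂ) : ℂ → ℂ := fun x => (f (x + 1) - f (x - 1)) / (4 * x)

/-- The stabilizing S–Heun operator M₁ on the quadratic grid. -/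
def opM1 (f : ℂ → ℂ) : ℂ → ℂ :=
  fun x => ((2 * x - 1) * f (x + 1) + (2 * x + 1) * f (x - 1)) / (4 * x)

/-- The stabilizing S–Heun operator M₂ on the quadratic grid. -/
def opM2 (f : ℂ → ℂ) : ℂ → ℂ :=
  fun x => ((x ^ 2 + (x - 1) ^ 2) * f (x + 1) - ((x + 1) ^ 2 + x ^ 2) * f (x - 1)) / (4 * x)

/-- The raising S–Heun operator R₁ = λ_x M₁ on the quadratic grid. -/
def opR1 (f : ℂ → ℂ) : ℂ → ℂ := fun x => x ^ 2 * opM1 f x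

/-- The raising S–Heun operator R₂ = λ_x M₂ on the quadratic grid. -/
def opR2 (f : ℂ → ℂ) : ℂ → ℂ := fun x => x ^ 2 * opM2 f x

/-- U = M₁ + e₁L. -/
def oU (e₁ : ℂ) (f : ℂ → ℂ) : ℂ → ℂ := fun x => opM1 f x + e₁ * opL f x

/-- V = M₂ + e₁M₁ + ½e₁²L. -/
def oV (e₁ : ℂ) (f : ℂ → ℂ) : ℂ → ℂ :=
  fun x => opM2 f x + e₁ * opM1 f x + (e₁ ^ 2 / 2) * opL f x

/-- Y = L. -/
def oY (f : ℂ → ℂ) : ℂ → ℂ := opL f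

/-- R = R₂ + (2e₁−3)R₁ + ½(3e₁²−10e₁+4)M₂ + ½(e₁+1)(e₁²−4e₁+2)M₁
      + ⅛(e₁⁴−4e₁³−8e₁²+24e₁−8)L. -/
def oR (e₁ : ℂ) (f : ℂ → ℂ) : ℂ → ℂ := fun x =>
  opR2 f x + (2 * e₁ - 3) * opR1 f x + ((3 * e₁ ^ 2 - 10 * e₁ + 4) / 2) * opM2 f x
    + ((e₁ + 1) * (e₁ ^ 2 - 4 * e₁ + 2) / 2) * opM1 f x
    + ((e₁ ^ 4 - 4 * e₁ ^ 3 - 8 * e₁ ^ 2 + 24 * e₁ - 8) / 8) * opL f x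

def gridOp (a b : ℂ → ℂ) (f : ℂ → ℂ) (x : ℂ) : ℂ :=
  (a x * f (x + 1) + b x * f (x - 1)) / (4 * x)

theorem gridOp_gridOp (a b c d f : ℂ → ℂ) {x : ℂ} (hx₀ : x ≠ 0) (hx₁ : x - 1 ≠ 0)
    (hx₂ : x + 1 ≠ 0) :
    gridOp a b (gridOp c d f) x =
      (a x * c (x + 1) * (x - 1) * f (x + 2)
        + (a x * d (x + 1) * (x - 1) + b x * c (x - 1) * (x + 1)) * f x
        + b x * d (x - 1) * (x + 1) * f (x - 2)) / (16 * (x * (x - 1) * (x + 1))) := by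
  simp only [gridOp, add_sub_cancel_right, sub_add_cancel, add_assoc, one_add_one_eq_two,
    sub_sub]
  field_simp
  ring

theorem oY_eq_gridOp : oY = gridOp (fun _ => 1) (fun _ => -1) := by
  funext f x
  simp only [oY, opL, gridOp]
  ring

theorem oU_eq_gridOp (e₁ : ℂ) :
    oU e₁ = gridOp (fun x => 2 * x - 1 + e₁) (fun x => 2 * x + 1 - e₁) := by
  funext f x
  simp only [oU, opM1, opL, gridOp]
  ring

theorem oV_eq_gridOp (e₁ : ℂ) :
    oV e₁ = gridOp (fun x => x ^ 2 + (x - 1) ^ 2 + e₁ * (2 * x - 1) + e₁ ^ 2 / 2)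
      (fun x => -((x + 1) ^ 2 + x ^ 2) + e₁ * (2 * x + 1) - e₁ ^ 2 / 2) := by
  funext f x
  simp only [oV, opM2, opM1, opL, gridOp]
  ring

theorem oR_eq_gridOp (e₁ : ℂ) :
    oR e₁ = gridOp
      (fun x => (x ^ 2 + (3 * e₁ ^ 2 - 10 * e₁ + 4) / 2) * (x ^ 2 + (x - 1) ^ 2)
        + ((2 * e₁ - 3) * x ^ 2 + (e₁ + 1) * (e₁ ^ 2 - 4 * e₁ + 2) / 2) * (2 * x - 1)
        + (e₁ ^ 4 - 4 * e₁ ^ 3 - 8 * e₁ ^ 2 + 24 * e₁ - 8) / 8)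
      (fun x => -((x ^ 2 + (3 * e₁ ^ 2 - 10 * e₁ + 4) / 2) * ((x + 1) ^ 2 + x ^ 2))
        + ((2 * e₁ - 3) * x ^ 2 + (e₁ + 1) * (e₁ ^ 2 - 4 * e₁ + 2) / 2) * (2 * x + 1)
        - (e₁ ^ 4 - 4 * e₁ ^ 3 - 8 * e₁ ^ 2 + 24 * e₁ - 8) / 8) := by
  funext f x
  simp only [oR, opR2, opR1, opM2, opM1, opL, gridOp]
  ring

theorem stmt15 (e₁ : ℂ) (f : ℂ → ℂ) (x : ℂ) (hx : x * (x - 1) * (x + 1) ≠ 0) :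
    (oV e₁ (oY f) x - oY (oV e₁ f) x = -(oU e₁ (oY f) x + oY (oU e₁ f) x)) ∧
    (oU e₁ (oY f) x - oY (oU e₁ f) x = -(oY (oY f) x + oY (oY f) x)) ∧
    (oU e₁ (oV e₁ f) x - oV e₁ (oU e₁ f) x
      = (oV e₁ (oY f) x + oY (oV e₁ f) x) - 2 * (oY (oY f) x + oY (oY f) x)) ∧
    (oR e₁ (oY f) x - oY (oR e₁ f) x
      = (oU e₁ (oU e₁ f) x + oU e₁ (oU e₁ f) x)
        - (oU e₁ (oV e₁ f) x + oV e₁ (oU e₁ f) x)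
        + (oV e₁ (oY f) x + oY (oV e₁ f) x)) ∧
    (oR e₁ (oV e₁ f) x - oV e₁ (oR e₁ f) x
      = 2 * (oV e₁ (oY f) x + oY (oV e₁ f) x) - (oY (oY f) x + oY (oY f) x)
        - (oV e₁ (oV e₁ f) x + oV e₁ (oV e₁ f) x)
        - (oU e₁ (oR e₁ f) x + oR e₁ (oU e₁ f) x)) ∧
    (oR e₁ (oU e₁ f) x - oU e₁ (oR e₁ f) x
      = (oU e₁ (oV e₁ f) x + oV e₁ (oU e₁ f) x)
        + 2 * (oV e₁ (oY f) x + oY (oV e₁ f) x)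
        - 2 * (oU e₁ (oY f) x + oY (oU e₁ f) x)
        - (oV e₁ (oV e₁ f) x + oV e₁ (oV e₁ f) x)
        - (oY (oY f) x + oY (oY f) x)
        - (oR e₁ (oY f) x + oY (oR e₁ f) x)) ∧
    (oU e₁ (oU e₁ f) x - (oV e₁ (oY f) x + oY (oV e₁ f) x) + 3 * oY (oY f) x = f x) ∧
    (oU e₁ (oU e₁ f) x + oV e₁ (oV e₁ f) x - (oU e₁ (oV e₁ f) x + oV e₁ (oU e₁ f) x)
        - (oU e₁ (oY f) x + oY (oU e₁ f) x) - (oR e₁ (oY f) x + oY (oR e₁ f) x)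
      = (e₁ - 2) * (e₁ - 4) * f x) := by
  have hx₀ : x ≠ 0 := left_ne_zero_of_mul (left_ne_zero_of_mul hx)
  have hx₁ : x - 1 ≠ 0 := right_ne_zero_of_mul (left_ne_zero_of_mul hx)
  have hx₂ : x + 1 ≠ 0 := right_ne_zero_of_mul hx
  rw [oY_eq_gridOp, oU_eq_gridOp, oV_eq_gridOp, oR_eq_gridOp]
  simp only [gridOp_gridOp _ _ _ _ f hx₀ hx₁ hx₂]
  refine ⟨?_, ?_, ?_, ?_, ?_, ?_, ?_, ?_⟩ <;> (field_simp; ring)
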